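/- arXiv:2411.18344 — 5 statements merged into one kernel-verified Lean document; each statement's English description precedes it below -/
import Mathlib

section
/- Let V be a real inner product space, W a real normed space, and F₁, …, F_s linear subspaces of V forming an internal direct sum E = F₁ ⊕ ⋯ ⊕ F_s. Suppose θ ∈ (0, π/2] is such that for every i and all nonzero u ∈ F_i and nonzero w ∈ ⊕_{j ≠ i} F_j, the angle between u and w is at least θ. Then for every v ∈ E with decomposition v = v₁ + ⋯ + v_s (v_i ∈ F_i), one has ‖v_i‖ ≤ ‖v‖ / sin θ for each i; consequently, for every linear map T : V → W, ‖T v‖ ≤ (s / sin θ) (max_i ‖T|_{F_i}‖) ‖v‖, where ‖T|_{F_i}‖ denotes the operator norm of the restriction of T to F_i. -/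
/-!
Split `v = vᵢ + w` with `w` the sum of the other components. Both `w` and `-w` lie in the sum of
the other subspaces, so the angle between `vᵢ` and `w` lies in `[θ, π - θ]` and
`|⟪vᵢ, w⟫| ≤ cos θ ‖vᵢ‖ ‖w‖`. Completing the square,
`‖v‖² ≥ ‖vᵢ‖² - 2 cos θ ‖vᵢ‖ ‖w‖ + ‖w‖² = (‖w‖ - cos θ ‖vᵢ‖)² + sin² θ ‖vᵢ‖²`,
whence `‖vᵢ‖ sin θ ≤ ‖v‖`. The bound on `T v` follows by the triangle inequality over the `s`
components.
-/

open InnerProductGeometry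

section Angle

variable {V : Type*} [NormedAddCommGroup V] [InnerProductSpace ℝ V]

lemma abs_cos_angle_le_cos {u w : V} {θ : ℝ} (hθ : 0 ≤ θ) (h : θ ≤ angle u w)
    (h' : θ ≤ angle u (-w)) : |Real.cos (angle u w)| ≤ Real.cos θ := by
  rw [angle_neg_right] at h'
  refine abs_le.mpr ⟨?_, ?_⟩
  · have := Real.cos_le_cos_of_nonneg_of_le_pi (angle_nonneg u w)
      (by linarith : Real.pi - θ ≤ Real.pi) (by linarith : angle u w ≤ Real.pi - θ)
    rw [Real.cos_pi_sub] at this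
    linarith
  · exact Real.cos_le_cos_of_nonneg_of_le_pi hθ (angle_le_pi u w) h

lemma norm_mul_sin_le_norm_add {u w : V} {θ : ℝ} (hθ : 0 ≤ θ) (h : θ ≤ angle u w)
    (h' : θ ≤ angle u (-w)) : ‖u‖ * Real.sin θ ≤ ‖u + w‖ := by
  have hcos := abs_cos_angle_le_cos hθ h h'
  have hinner : -(Real.cos θ * (‖u‖ * ‖w‖)) ≤ inner ℝ u w := by
    rw [← cos_angle_mul_norm_mul_norm]
    nlinarith [neg_abs_le (Real.cos (angle u w)), mul_nonneg (norm_nonneg u) (norm_nonneg w)]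
  have hsq : (‖u‖ * Real.sin θ) ^ 2 ≤ ‖u + w‖ ^ 2 := by
    rw [norm_add_sq_real]
    nlinarith [sq_nonneg (‖w‖ - Real.cos θ * ‖u‖), Real.sin_sq_add_cos_sq θ]
  exact (abs_le_of_sq_le_sq hsq (norm_nonneg _)).trans' (le_abs_self _)

lemma norm_mul_sin_le_norm_add_of_mem {P Q : Submodule ℝ V} {θ : ℝ} (hθ : 0 ≤ θ)
    (hangle : ∀ u ∈ P, u ≠ 0 → ∀ w ∈ Q, w ≠ 0 → θ ≤ angle u w)
    {u w : V} (hu : u ∈ P) (hw : w ∈ Q) : ‖u‖ * Real.sin θ ≤ ‖u + w‖ := by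
  rcases eq_or_ne u 0 with rfl | hu0
  · simp
  rcases eq_or_ne w 0 with rfl | hw0
  · simpa using mul_le_of_le_one_right (norm_nonneg u) (Real.sin_le_one θ)
  exact norm_mul_sin_le_norm_add hθ (hangle u hu hu0 w hw hw0)
    (hangle u hu hu0 (-w) (Q.neg_mem hw) (neg_ne_zero.mpr hw0))

end Angle

lemma sum_erase_mem_iSup_ne {ι V : Type*} [Fintype ι] [DecidableEq ι] [AddCommMonoid V]
    [Module ℝ V] {F : ι → Submodule ℝ V} {vs : ι → V} (hvs : ∀ i, vs i ∈ F i) (i : ι) :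
    ∑ j ∈ Finset.univ.erase i, vs j ∈ (⨆ j, ⨆ _ : j ≠ i, F j : Submodule ℝ V) :=
  Submodule.sum_mem _ fun j hj =>
    Submodule.mem_iSup_of_mem j (Submodule.mem_iSup_of_mem (Finset.ne_of_mem_erase hj) (hvs j))

lemma norm_component_mul_sin_le {ι V : Type*} [Fintype ι] [NormedAddCommGroup V]
    [InnerProductSpace ℝ V] {F : ι → Submodule ℝ V} {θ : ℝ} (hθ : 0 ≤ θ)
    (hangle : ∀ i, ∀ u ∈ F i, u ≠ 0 →
      ∀ w ∈ (⨆ j, ⨆ _ : j ≠ i, F j : Submodule ℝ V), w ≠ 0 → θ ≤ angle u w)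
    {vs : ι → V} (hvs : ∀ i, vs i ∈ F i) (i : ι) :
    ‖vs i‖ * Real.sin θ ≤ ‖∑ j, vs j‖ := by
  classical
  rw [← Finset.add_sum_erase _ _ (Finset.mem_univ i)]
  exact norm_mul_sin_le_norm_add_of_mem hθ (hangle i) (hvs i) (sum_erase_mem_iSup_ne hvs i)

lemma norm_map_sum_le_card_mul_iSup_mul {ι 𝕜 E W : Type*} [Fintype ι]
    [NontriviallyNormedField 𝕜] [SeminormedAddCommGroup E] [NormedSpace 𝕜 E]
    [SeminormedAddCommGroup W] [NormedSpace 𝕜 W] (T : E →L[𝕜] W) {F : ι → Submodule 𝕜 E}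
    {vs : ι → E} (hvs : ∀ i, vs i ∈ F i) {C : ℝ} (hC : ∀ i, ‖vs i‖ ≤ C) :
    ‖T (∑ i, vs i)‖ ≤ Fintype.card ι * (⨆ i, ‖T.comp (F i).subtypeL‖) * C := by
  set M := ⨆ i, ‖T.comp (F i).subtypeL‖
  have hM : ∀ i, ‖T.comp (F i).subtypeL‖ ≤ M :=
    le_ciSup (Set.finite_range _).bddAbove
  have hterm (i : ι) : ‖T (vs i)‖ ≤ M * C :=
    calc ‖T (vs i)‖ ≤ ‖T.comp (F i).subtypeL‖ * ‖vs i‖ :=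
          (T.comp (F i).subtypeL).le_opNorm ⟨vs i, hvs i⟩
      _ ≤ M * C :=
          mul_le_mul (hM i) (hC i) (norm_nonneg _) (Real.iSup_nonneg fun _ => norm_nonneg _)
  calc ‖T (∑ i, vs i)‖ ≤ ∑ i, ‖T (vs i)‖ := by rw [map_sum]; exact norm_sum_le _ _
    _ ≤ ∑ _i : ι, M * C := Finset.sum_le_sum fun i _ => hterm i
    _ = Fintype.card ι * M * C := by simp [mul_assoc]

theorem stmt5_general {V W : Type*} [NormedAddCommGroup V] [InnerProductSpace ℝ V]
    [NormedAddCommGroup W] [NormedSpace ℝ W]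
    (s : ℕ) (F : Fin s → Submodule ℝ V)
    (θ : ℝ) (hθ₁ : 0 < θ) (hθ₂ : θ ≤ Real.pi / 2)
    (hangle : ∀ i : Fin s, ∀ u ∈ F i, u ≠ 0 →
      ∀ w ∈ (⨆ j : Fin s, ⨆ _ : j ≠ i, F j : Submodule ℝ V), w ≠ 0 →
        θ ≤ InnerProductGeometry.angle u w)
    (v : V) (vs : Fin s → V) (hvs : ∀ i, vs i ∈ F i) (hv : v = ∑ i, vs i) :
    (∀ i, ‖vs i‖ ≤ ‖v‖ / Real.sin θ) ∧
    ∀ T : V →L[ℝ] W,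
      ‖T v‖ ≤ ((s : ℝ) / Real.sin θ) * (⨆ i : Fin s, ‖T.comp (F i).subtypeL‖) * ‖v‖ := by
  have hsin : 0 < Real.sin θ :=
    Real.sin_pos_of_pos_of_lt_pi hθ₁ (hθ₂.trans_lt (by linarith [Real.pi_pos]))
  have hcomp (i : Fin s) : ‖vs i‖ ≤ ‖v‖ / Real.sin θ := by
    rw [le_div_iff₀ hsin, hv]
    exact norm_component_mul_sin_le hθ₁.le hangle hvs i
  refine ⟨hcomp, fun T => ?_⟩
  have := norm_map_sum_le_card_mul_iSup_mul T hvs hcomp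
  rw [← hv, Fintype.card_fin] at this
  calc ‖T v‖ ≤ s * (⨆ i, ‖T.comp (F i).subtypeL‖) * (‖v‖ / Real.sin θ) := this
    _ = _ := by ring

/-- Components of a vector in a direct sum of subspaces with pairwise angles (between each
subspace and the sum of the others) at least `θ` satisfy `‖vᵢ‖ ≤ ‖v‖ / sin θ`; hence any
linear map `T` satisfies `‖T v‖ ≤ (s / sin θ) (maxᵢ ‖T|_{Fᵢ}‖) ‖v‖` on the direct sum. -/
theorem stmt5 {V W : Type*} [NormedAddCommGroup V] [InnerProductSpace ℝ V]
    [NormedAddCommGroup W] [NormedSpace ℝ W]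
    (s : ℕ) (F : Fin s → Submodule ℝ V)
    (hind : ∀ c : Fin s → V, (∀ i, c i ∈ F i) → ∑ i, c i = 0 → ∀ i, c i = 0)
    (θ : ℝ) (hθ₁ : 0 < θ) (hθ₂ : θ ≤ Real.pi / 2)
    (hangle : ∀ i : Fin s, ∀ u ∈ F i, u ≠ 0 →
      ∀ w ∈ (⨆ j : Fin s, ⨆ _ : j ≠ i, F j : Submodule ℝ V), w ≠ 0 →
        θ ≤ InnerProductGeometry.angle u w)
    (v : V) (vs : Fin s → V) (hvs : ∀ i, vs i ∈ F i) (hv : v = ∑ i, vs i) :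
    (∀ i, ‖vs i‖ ≤ ‖v‖ / Real.sin θ) ∧
    ∀ T : V →L[ℝ] W,
      ‖T v‖ ≤ ((s : ℝ) / Real.sin θ) * (⨆ i : Fin s, ‖T.comp (F i).subtypeL‖) * ‖v‖ :=
  stmt5_general s F θ hθ₁ hθ₂ hangle v vs hvs hv
end

section
/- Let V be a finite-dimensional real inner product space, a ∈ ℝ, ε > 0, C ≥ 1. Let (T_n)_{n≥0} and (T′_n)_{n≥0} be linear maps V → V with T₀ = T′₀ = id, and let B : V → V be a linear map satisfying T′_n ∘ B = T_{n+1} for all n ≥ 0. Assume ‖T_n v‖ ≤ C e^{(a+ε)n} ‖v‖ and ‖T′_n v‖ ≤ C e^{(a+ε)n} ‖v‖ for all n ≥ 0 and v ∈ V. Define ‖v‖′ = (Σ_{n≥0} e^{−2(a+2ε)n} ‖T_n v‖²)^{1/2} and ‖w‖″ = (Σ_{n≥0} e^{−2(a+2ε)n} ‖T′_n w‖²)^{1/2}. Then ‖B v‖″ ≤ e^{a+2ε} ‖v‖′ for all v ∈ V. -/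
/-- In the Lyapunov metrics `‖v‖′ = (Σ e^{−2(a+2ε)n}‖Tₙ v‖²)^{1/2}` and
`‖w‖″ = (Σ e^{−2(a+2ε)n}‖T′ₙ w‖²)^{1/2}`, a map `B` with `T′ₙ ∘ B = T_{n+1}` is a
uniform contraction: `‖B v‖″ ≤ e^{a+2ε} ‖v‖′`. -/
theorem stmt7 {V : Type*} [NormedAddCommGroup V] [InnerProductSpace ℝ V]
    [FiniteDimensional ℝ V]
    (a ε C : ℝ) (hC : 1 ≤ C) (hε : 0 < ε)
    (T T' : ℕ → V →ₗ[ℝ] V) (B : V →ₗ[ℝ] V)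
    (hT0 : T 0 = LinearMap.id) (hT'0 : T' 0 = LinearMap.id)
    (hrec : ∀ n : ℕ, (T' n).comp B = T (n + 1))
    (hT : ∀ (n : ℕ) (v : V), ‖T n v‖ ≤ C * Real.exp ((a + ε) * n) * ‖v‖)
    (hT' : ∀ (n : ℕ) (v : V), ‖T' n v‖ ≤ C * Real.exp ((a + ε) * n) * ‖v‖)
    (v : V) :
    Real.sqrt (∑' n : ℕ, Real.exp (-2 * (a + 2 * ε) * n) * ‖T' n (B v)‖ ^ 2) ≤
      Real.exp (a + 2 * ε) *
        Real.sqrt (∑' n : ℕ, Real.exp (-2 * (a + 2 * ε) * n) * ‖T n v‖ ^ 2) := by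
  set L := a + 2 * ε with hL
  set f : ℕ → ℝ := fun n => Real.exp (-2 * L * n) * ‖T n v‖ ^ 2 with hf
  have hfnn : ∀ n, 0 ≤ f n := fun n => by positivity
  -- summability of f
  have hsum : Summable f := by
    have hg : Summable (fun n : ℕ => (C * ‖v‖) ^ 2 * Real.exp (-2 * ε) ^ n) :=
      (summable_geometric_of_lt_one (Real.exp_nonneg _)
        (Real.exp_lt_one_iff.mpr (by linarith))).mul_left _
    refine Summable.of_nonneg_of_le hfnn (fun n => ?_) hg
    · have h1 : ‖T n v‖ ^ 2 ≤ (C * Real.exp ((a + ε) * n) * ‖v‖) ^ 2 := by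
        apply pow_le_pow_left₀ (norm_nonneg _) (hT n v)
      calc f n ≤ Real.exp (-2 * L * n) * (C * Real.exp ((a + ε) * n) * ‖v‖) ^ 2 := by
            exact mul_le_mul_of_nonneg_left h1 (Real.exp_nonneg _)
        _ = (C * ‖v‖) ^ 2 * Real.exp (-2 * ε) ^ n := by
            rw [← Real.exp_nat_mul, mul_pow, mul_pow, ← Real.exp_nat_mul]
            have e1 : Real.exp (-2 * L * (n : ℝ)) *
                Real.exp (((2 : ℕ) : ℝ) * ((a + ε) * (n : ℝ))) =
                Real.exp ((n : ℝ) * (-2 * ε)) := by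
              rw [← Real.exp_add]; congr 1; rw [hL]; push_cast; ring
            linear_combination C ^ 2 * ‖v‖ ^ 2 * e1
  -- identify T' n (B v) with T (n+1) v
  have hid : ∀ n, T' n (B v) = T (n + 1) v := fun n => by
    rw [← hrec n]; rfl
  have key : (∑' n : ℕ, Real.exp (-2 * L * n) * ‖T' n (B v)‖ ^ 2)
      ≤ Real.exp (2 * L) * ∑' n, f n := by
    have heq : ∀ n : ℕ, Real.exp (-2 * L * n) * ‖T' n (B v)‖ ^ 2
        = Real.exp (2 * L) * f (n + 1) := by
      intro n
      rw [hid n, hf]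
      simp only
      rw [← mul_assoc, ← Real.exp_add]
      congr 2
      push_cast
      ring
    rw [tsum_congr heq, tsum_mul_left]
    have hsum1 : Summable (fun n => f (n + 1)) := hsum.comp_injective Nat.succ_injective
    apply mul_le_mul_of_nonneg_left _ (Real.exp_nonneg _)
    rw [Summable.tsum_eq_zero_add hsum]
    linarith [hfnn 0]
  have hS : 0 ≤ ∑' n, f n := tsum_nonneg hfnn
  calc Real.sqrt (∑' n : ℕ, Real.exp (-2 * L * n) * ‖T' n (B v)‖ ^ 2)
      ≤ Real.sqrt (Real.exp (2 * L) * ∑' n, f n) := Real.sqrt_le_sqrt key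
    _ = Real.exp L * Real.sqrt (∑' n, f n) := by
        rw [Real.sqrt_mul (Real.exp_nonneg _)]
        congr 1
        rw [show (2 : ℝ) * L = L + L by ring, Real.exp_add, Real.sqrt_mul_self (Real.exp_nonneg _)]
end

section
/- Let V be a finite-dimensional real inner product space, b ∈ ℝ, ε > 0, C ≥ 1. Let (P_n)_{n≥0} and (P′_n)_{n≥0} be linear maps V → V with P₀ = P′₀ = id, let B : V → V be an invertible linear map, and suppose P′_{n+1} = P_n ∘ B⁻¹ for all n ≥ 0. Assume ‖P_n v‖ ≤ C e^{−(b−ε)n} ‖v‖ and ‖P′_n v‖ ≤ C e^{−(b−ε)n} ‖v‖ for all n ≥ 0 and v ∈ V. Define N(v) = (Σ_{n≥0} e^{2(b−2ε)n} ‖P_n v‖²)^{1/2} and N′(v) = (Σ_{n≥0} e^{2(b−2ε)n} ‖P′_n v‖²)^{1/2}. Then both series converge and N′(B v) ≥ e^{b−2ε} N(v) for all v ∈ V. -/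
/-- In the Lyapunov metrics `N(v) = (Σ e^{2(b−2ε)n}‖Pₙ v‖²)^{1/2}` and
`N′(w) = (Σ e^{2(b−2ε)n}‖P′ₙ w‖²)^{1/2}`, where `P′_{n+1} = Pₙ ∘ B⁻¹` and
`‖Pₙ v‖, ‖P′ₙ v‖ ≤ C e^{−(b−ε)n}‖v‖`, both series converge and `B` is a uniform
expansion: `N′(B v) ≥ e^{b−2ε} N(v)`. -/
theorem stmt8 {V : Type*} [NormedAddCommGroup V] [InnerProductSpace ℝ V]
    [FiniteDimensional ℝ V]
    (b ε C : ℝ) (hC : 1 ≤ C) (hε : 0 < ε)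
    (P P' : ℕ → V →ₗ[ℝ] V) (B : V ≃ₗ[ℝ] V)
    (hP0 : P 0 = LinearMap.id) (hP'0 : P' 0 = LinearMap.id)
    (hrec : ∀ n : ℕ, P' (n + 1) = (P n).comp (B.symm : V →ₗ[ℝ] V))
    (hP : ∀ (n : ℕ) (v : V), ‖P n v‖ ≤ C * Real.exp (-(b - ε) * n) * ‖v‖)
    (hP' : ∀ (n : ℕ) (v : V), ‖P' n v‖ ≤ C * Real.exp (-(b - ε) * n) * ‖v‖) :
    (∀ v : V, Summable fun n : ℕ => Real.exp (2 * (b - 2 * ε) * n) * ‖P n v‖ ^ 2) ∧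
    (∀ v : V, Summable fun n : ℕ => Real.exp (2 * (b - 2 * ε) * n) * ‖P' n v‖ ^ 2) ∧
    ∀ v : V,
      Real.exp (b - 2 * ε) *
          Real.sqrt (∑' n : ℕ, Real.exp (2 * (b - 2 * ε) * n) * ‖P n v‖ ^ 2) ≤
        Real.sqrt (∑' n : ℕ, Real.exp (2 * (b - 2 * ε) * n) * ‖P' n (B v)‖ ^ 2) := by
  have key : ∀ (Q : ℕ → V →ₗ[ℝ] V),
      (∀ (n : ℕ) (v : V), ‖Q n v‖ ≤ C * Real.exp (-(b - ε) * n) * ‖v‖) →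
      ∀ v : V, Summable fun n : ℕ => Real.exp (2 * (b - 2 * ε) * n) * ‖Q n v‖ ^ 2 := by
    intro Q hQ v
    have hsum : Summable fun n : ℕ => (C * ‖v‖) ^ 2 * Real.exp (-(2 * ε)) ^ n := by
      apply Summable.mul_left
      exact summable_geometric_of_lt_one (Real.exp_nonneg _)
        (Real.exp_lt_one_iff.2 (by linarith))
    refine Summable.of_nonneg_of_le (fun n => by positivity) (fun n => ?_) hsum
    have h1 : ‖Q n v‖ ^ 2 ≤ (C * Real.exp (-(b - ε) * n) * ‖v‖) ^ 2 := by
      apply pow_le_pow_left₀ (norm_nonneg _) (hQ n v)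
    calc Real.exp (2 * (b - 2 * ε) * n) * ‖Q n v‖ ^ 2
        ≤ Real.exp (2 * (b - 2 * ε) * n) * (C * Real.exp (-(b - ε) * n) * ‖v‖) ^ 2 := by
          exact mul_le_mul_of_nonneg_left h1 (Real.exp_nonneg _)
      _ = (C * ‖v‖) ^ 2 * Real.exp (-(2 * ε)) ^ n := by
          rw [← Real.exp_nat_mul, mul_pow, mul_pow, sq (Real.exp (-(b - ε) * n)),
            ← Real.exp_add,
            show Real.exp (2 * (b - 2 * ε) * n) *
                (C ^ 2 * Real.exp (-(b - ε) * n + -(b - ε) * n) * ‖v‖ ^ 2) =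
              C ^ 2 * ‖v‖ ^ 2 * (Real.exp (2 * (b - 2 * ε) * n) *
                Real.exp (-(b - ε) * n + -(b - ε) * n)) from by ring,
            ← Real.exp_add, mul_pow]
          congr 1
          exact congrArg Real.exp (by ring)
  refine ⟨key P hP, key P' hP', fun v => ?_⟩
  set a := b - 2 * ε with ha
  have hS : Summable fun n : ℕ => Real.exp (2 * a * n) * ‖P' n (B v)‖ ^ 2 := key P' hP' (B v)
  have hT : Summable fun n : ℕ => Real.exp (2 * a * n) * ‖P n v‖ ^ 2 := key P hP v
  have hterm : ∀ n : ℕ, Real.exp (2 * a * (n + 1 : ℕ)) * ‖P' (n + 1) (B v)‖ ^ 2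
      = Real.exp (2 * a) * (Real.exp (2 * a * n) * ‖P n v‖ ^ 2) := by
    intro n
    have : P' (n + 1) (B v) = P n v := by
      rw [hrec n]; simp
    rw [this, show (2:ℝ) * a * ((n : ℕ) + 1 : ℕ) = 2 * a + 2 * a * n by push_cast; ring,
      Real.exp_add, mul_assoc]
  have hshift : (∑' n : ℕ, Real.exp (2 * a * (n + 1 : ℕ)) * ‖P' (n + 1) (B v)‖ ^ 2)
      = Real.exp (2 * a) * ∑' n : ℕ, Real.exp (2 * a * n) * ‖P n v‖ ^ 2 := by
    simp_rw [hterm]; rw [tsum_mul_left]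
  have hge : Real.exp (2 * a) * (∑' n : ℕ, Real.exp (2 * a * n) * ‖P n v‖ ^ 2)
      ≤ ∑' n : ℕ, Real.exp (2 * a * n) * ‖P' n (B v)‖ ^ 2 := by
    rw [Summable.tsum_eq_zero_add hS, ← hshift]
    have h0 : 0 ≤ Real.exp (2 * a * (0 : ℕ)) * ‖P' 0 (B v)‖ ^ 2 := by positivity
    linarith
  have hTnn : 0 ≤ ∑' n : ℕ, Real.exp (2 * a * n) * ‖P n v‖ ^ 2 :=
    tsum_nonneg fun n => by positivity
  calc Real.exp a * Real.sqrt (∑' n : ℕ, Real.exp (2 * a * n) * ‖P n v‖ ^ 2)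
      = Real.sqrt (Real.exp (2 * a) * ∑' n : ℕ, Real.exp (2 * a * n) * ‖P n v‖ ^ 2) := by
        rw [Real.sqrt_mul (Real.exp_nonneg _), show (2:ℝ) * a = a + a by ring,
          Real.exp_add, Real.sqrt_mul_self (Real.exp_nonneg _)]
    _ ≤ _ := Real.sqrt_le_sqrt hge
end

section
/- Let f : ℝ^d → ℝ^d be continuously differentiable, x ∈ ℝ^d, r > 0, c > 0, and suppose σ(Df(y)) ≥ c for every y in the open ball B(x, r), where σ denotes the co-norm. Then f(B(x, r)) ⊇ B(f(x), c r / 2); that is, every point at distance less than c r / 2 from f(x) lies in the image of the open ball B(x, r) under f. -/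
/-
At every point `y` of the ball, `Df(y)` is invertible with `‖Df(y)⁻¹‖ ≤ 1/c`, so by the inverse
function theorem every `w` near `f y` has a preimage `y'` with `‖y' - y‖ ≤ K ‖w - f y‖`, for any
fixed `K > 1/c`. Lifting the segment from `f x` to `z` piece by piece with this estimate (a
continuous induction on the segment parameter; closedness comes from compactness of closed balls)
yields a preimage of `z` within distance `K ‖z - f x‖` of `x`, which is `< r` as soon as
`‖z - f x‖ < c r`. So even `B(f x, c r)` lies in the image.
-/

/-- The co-norm (minimal norm) of a continuous linear map:
`conorm A = inf_{v ≠ 0} ‖A v‖ / ‖v‖`. -/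
noncomputable def conorm {E F : Type*} [NormedAddCommGroup E] [NormedAddCommGroup F]
    [NormedSpace ℝ E] [NormedSpace ℝ F] (A : E →L[ℝ] F) : ℝ :=
  ⨅ v : {v : E // v ≠ 0}, ‖A v.1‖ / ‖v.1‖

open Metric Filter Topology Set Function
open scoped NNReal

section Conorm

variable {E F : Type*} [NormedAddCommGroup E] [NormedAddCommGroup F]
  [NormedSpace ℝ E] [NormedSpace ℝ F]

theorem mul_norm_le_norm_apply_of_le_conorm {A : E →L[ℝ] F} {c : ℝ} (h : c ≤ conorm A)
    (v : E) : c * ‖v‖ ≤ ‖A v‖ := by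
  rcases eq_or_ne v 0 with rfl | hv
  · simp
  have hbdd : BddBelow (range fun v : {v : E // v ≠ 0} => ‖A v.1‖ / ‖v.1‖) :=
    ⟨0, by rintro _ ⟨u, rfl⟩; positivity⟩
  rw [← le_div_iff₀ (norm_pos_iff.2 hv)]
  exact h.trans (ciInf_le hbdd ⟨v, hv⟩)

theorem injective_of_conorm_pos {A : E →L[ℝ] F} (h : 0 < conorm A) : Injective A := by
  refine (injective_iff_map_eq_zero A).2 fun v hv => norm_eq_zero.1 ?_
  have := mul_norm_le_norm_apply_of_le_conorm (A := A) le_rfl v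
  rw [hv, norm_zero] at this
  exact le_antisymm (nonpos_of_mul_nonpos_right this h) (norm_nonneg v)

theorem ContinuousLinearEquiv.norm_symm_le_inv_of_mul_norm_le (A : E ≃L[ℝ] F) {c : ℝ}
    (hc : 0 < c) (h : ∀ v, c * ‖v‖ ≤ ‖A v‖) : ‖(A.symm : F →L[ℝ] E)‖ ≤ c⁻¹ := by
  refine ContinuousLinearMap.opNorm_le_bound _ (inv_nonneg.2 hc.le) fun w => ?_
  rw [inv_mul_eq_div, le_div_iff₀' hc]
  simpa using h (A.symm w)

end Conorm

theorem HasStrictFDerivAt.eventually_exists_preimage_dist_le {E F : Type*}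
    [NormedAddCommGroup E] [NormedSpace ℝ E] [CompleteSpace E]
    [NormedAddCommGroup F] [NormedSpace ℝ F] {f : E → F} {A : E ≃L[ℝ] F} {y : E}
    (hA : HasStrictFDerivAt f (A : E →L[ℝ] F) y) {K : ℝ≥0}
    (hK : ‖(A.symm : F →L[ℝ] E)‖₊ < K) :
    ∀ᶠ w in 𝓝 (f y), ∃ y', f y' = w ∧ dist y' y ≤ K * dist w (f y) := by
  obtain ⟨s, hs, hlip⟩ := hA.to_localInverse.exists_lipschitzOnWith_of_nnnorm_lt K hK
  filter_upwards [hs, hA.eventually_right_inverse] with w hw hfw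
  refine ⟨hA.localInverse f A y w, hfw, ?_⟩
  simpa using hlip.dist_le_mul w hw (f y) (mem_of_mem_nhds hs)

theorem HasStrictFDerivAt.eventually_exists_preimage_of_one_lt_mul_conorm {E : Type*}
    [NormedAddCommGroup E] [NormedSpace ℝ E] [FiniteDimensional ℝ E] {f : E → E}
    {A : E →L[ℝ] E} {y : E} (hA : HasStrictFDerivAt f A y) {K : ℝ≥0}
    (hK : 1 < K * conorm A) :
    ∀ᶠ w in 𝓝 (f y), ∃ y', f y' = w ∧ dist y' y ≤ K * dist w (f y) := by
  have hσ : 0 < conorm A := pos_of_mul_pos_right (one_pos.trans hK) K.coe_nonneg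
  let A' : E ≃L[ℝ] E := (LinearEquiv.ofInjectiveEndo (A : E →ₗ[ℝ] E)
    (injective_of_conorm_pos hσ)).toContinuousLinearEquiv
  have hA' : (A' : E →L[ℝ] E) = A := rfl
  rw [← hA'] at hA
  refine hA.eventually_exists_preimage_dist_le ?_
  rw [← NNReal.coe_lt_coe, coe_nnnorm]
  calc ‖(A'.symm : E →L[ℝ] E)‖
      ≤ (conorm A)⁻¹ :=
        A'.norm_symm_le_inv_of_mul_norm_le hσ (mul_norm_le_norm_apply_of_le_conorm le_rfl)
    _ < K := (inv_lt_iff_one_lt_mul₀ hσ).2 hK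

theorem mem_image_closedBall_of_eventually_exists_preimage {E F : Type*} [MetricSpace E]
    [ProperSpace E] [NormedAddCommGroup F] [NormedSpace ℝ F] {f : E → F} (hf : Continuous f)
    {x : E} {z : F} {K : ℝ≥0}
    (hlift : ∀ y ∈ closedBall x (K * dist z (f x)),
      ∀ᶠ w in 𝓝 (f y), ∃ y', f y' = w ∧ dist y' y ≤ K * dist w (f y)) :
    z ∈ f '' closedBall x (K * dist z (f x)) := by
  set ρ := K * dist z (f x) with hρ
  have hρ0 : 0 ≤ ρ := by positivity
  let p : ℝ → F := AffineMap.lineMap (f x) z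
  have hp : Continuous p := AffineMap.lineMap_continuous
  let S : Set ℝ := {t | ∃ y, dist y x ≤ t * ρ ∧ f y = p t}
  have hS_closed : IsClosed (S ∩ Icc 0 1) := by
    have hS : S ∩ Icc 0 1 = Prod.fst ''
        ({q : ℝ × E | dist q.2 x ≤ q.1 * ρ ∧ f q.2 = p q.1} ∩ Icc 0 1 ×ˢ closedBall x ρ) := by
      ext t
      constructor
      · rintro ⟨⟨y, hyx, hfy⟩, ht⟩
        exact ⟨(t, y), ⟨⟨hyx, hfy⟩, ht, hyx.trans (mul_le_of_le_one_left hρ0 ht.2)⟩, rfl⟩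
      · rintro ⟨⟨t, y⟩, ⟨⟨hyx, hfy⟩, ht, -⟩, rfl⟩
        exact ⟨⟨y, hyx, hfy⟩, ht⟩
    rw [hS]
    refine (IsCompact.image ?_ continuous_fst).isClosed
    refine ((isCompact_Icc.prod (isCompact_closedBall x ρ)).inter_left ?_)
    exact (isClosed_le (continuous_snd.dist continuous_const)
      (continuous_fst.mul continuous_const)).inter
        (isClosed_eq (hf.comp continuous_snd) (hp.comp continuous_fst))
  have hS_zero : (0 : ℝ) ∈ S := ⟨x, by simp, by simp [p]⟩
  have hS_step : ∀ T ∈ S ∩ Ico 0 1, S ∈ 𝓝[>] T := by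
    rintro T ⟨⟨y, hyx, hfy⟩, hT0, hT1⟩
    have hy : y ∈ closedBall x ρ := hyx.trans (mul_le_of_le_one_left hρ0 hT1.le)
    have hlift' := (hp.tendsto T).eventually (hfy ▸ hlift y hy)
    filter_upwards [nhdsWithin_le_nhds hlift', self_mem_nhdsWithin]
      with t ⟨y', hfy', hy'y⟩ hTt
    refine ⟨y', ?_, hfy'⟩
    have hpt : dist (p t) (p T) = (t - T) * dist z (f x) := by
      rw [dist_lineMap_lineMap, Real.dist_eq, abs_of_pos (sub_pos.2 hTt), dist_comm (f x)]
    calc dist y' x ≤ dist y' y + dist y x := dist_triangle _ _ _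
      _ ≤ K * ((t - T) * dist z (f x)) + T * ρ := add_le_add (hpt ▸ hy'y) hyx
      _ = t * ρ := by rw [hρ]; ring
  obtain ⟨y, hyx, hfy⟩ := hS_closed.Icc_subset_of_forall_mem_nhdsWithin hS_zero hS_step
    (right_mem_Icc.2 zero_le_one)
  exact ⟨y, by simpa using hyx, by simpa [p] using hfy⟩

theorem ball_mul_subset_image_ball_of_le_conorm {E : Type*} [NormedAddCommGroup E]
    [NormedSpace ℝ E] [FiniteDimensional ℝ E] {f : E → E} (hf : ContDiff ℝ 1 f) {x : E}
    {r c : ℝ} (hc : 0 < c) (hσ : ∀ y ∈ ball x r, c ≤ conorm (fderiv ℝ f y)) :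
    ball (f x) (c * r) ⊆ f '' ball x r := by
  intro z hz
  rw [mem_ball] at hz
  have hr : 0 < r := pos_of_mul_pos_right (dist_nonneg.trans_lt hz) hc.le
  obtain ⟨K, hKc, hKr⟩ : ∃ K : ℝ≥0, 1 < K * c ∧ K * dist z (f x) < r := by
    obtain ⟨c', hzc', hc'c⟩ := exists_between ((div_lt_iff₀ hr).2 hz)
    have hc' : 0 < c' := (div_nonneg dist_nonneg hr.le).trans_lt hzc'
    refine ⟨⟨c'⁻¹, inv_nonneg.2 hc'.le⟩, ?_, ?_⟩
    · exact (one_lt_inv_mul₀ hc').2 hc'c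
    · exact (inv_mul_lt_iff₀ hc').2 ((div_lt_iff₀ hr).1 hzc')
  have hsub : closedBall x (K * dist z (f x)) ⊆ ball x r := closedBall_subset_ball hKr
  obtain ⟨y, hy, rfl⟩ := mem_image_closedBall_of_eventually_exists_preimage hf.continuous
    fun y hy => (hf.contDiffAt.hasStrictFDerivAt one_ne_zero)
      |>.eventually_exists_preimage_of_one_lt_mul_conorm
        (hKc.trans_le (mul_le_mul_of_nonneg_left (hσ y (hsub hy)) K.coe_nonneg))
  exact ⟨y, hsub hy, rfl⟩

/-- Quantitative image inclusion: if `f : ℝ^d → ℝ^d` is `C¹` and `σ(Df(y)) ≥ c` on the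
ball `B(x, r)`, then `f(B(x, r)) ⊇ B(f(x), c r / 2)`. -/
theorem stmt11 {d : ℕ} (f : EuclideanSpace ℝ (Fin d) → EuclideanSpace ℝ (Fin d))
    (hf : ContDiff ℝ 1 f) (x : EuclideanSpace ℝ (Fin d)) (r c : ℝ) (hr : 0 < r) (hc : 0 < c)
    (hσ : ∀ y ∈ Metric.ball x r, c ≤ conorm (fderiv ℝ f y)) :
    Metric.ball (f x) (c * r / 2) ⊆ f '' Metric.ball x r :=
  (ball_subset_ball (half_le_self (by positivity))).trans
    (ball_mul_subset_image_ball_of_le_conorm hf hc hσ)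
end

section
/- Let (X, 𝓑, μ) be a probability space, f : X → X a measure-preserving transformation, and ψ : X → ℝ a measurable function with ψ(x) > 0 for μ-almost every x. If the function g(x) = log ψ(f x) − log ψ(x) is μ-integrable, then ∫_X g dμ = 0. -/
open MeasureTheory Filter

private lemma clamp_lipschitz (n : ℕ) (a b : ℝ) :
    |max (min a n) (-(n:ℝ)) - max (min b n) (-(n:ℝ))| ≤ |a - b| := by
  refine (abs_max_sub_max_le_abs _ _ _).trans ?_
  have := abs_min_sub_min_le_max a (n:ℝ) b (n:ℝ)
  simpa using this.trans (by simp)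

/-- For a measure-preserving `f` on a probability space and a.e. positive measurable `ψ`,
if `g = log ψ ∘ f − log ψ` is integrable then `∫ g dμ = 0`. -/
theorem stmt15 {X : Type*} [MeasurableSpace X] (μ : Measure X) [IsProbabilityMeasure μ]
    (f : X → X) (hf : MeasurePreserving f μ μ)
    (ψ : X → ℝ) (hψm : Measurable ψ) (hψ : ∀ᵐ x ∂μ, 0 < ψ x)
    (hg : Integrable (fun x => Real.log (ψ (f x)) - Real.log (ψ x)) μ) :
    ∫ x, (Real.log (ψ (f x)) - Real.log (ψ x)) ∂μ = 0 := by
  set φ : X → ℝ := fun x => Real.log (ψ x) with hφ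
  have hφm : Measurable φ := hψm.log
  set T : ℕ → ℝ → ℝ := fun n t => max (min t n) (-(n:ℝ)) with hT
  have hTm : ∀ n, Measurable (fun x => T n (φ x)) := fun n =>
    (hφm.min measurable_const).max measurable_const
  have hTbd : ∀ n t, |T n t| ≤ n := by
    intro n t
    rw [abs_le]
    constructor
    · exact le_max_right _ _
    · exact max_le ((min_le_right _ _)) (by simp)
  have hTint : ∀ n, Integrable (fun x => T n (φ x)) μ := by
    intro n
    refine ⟨(hTm n).aestronglyMeasurable, ?_⟩
    refine HasFiniteIntegral.of_bounded (C := n) ?_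
    exact Filter.Eventually.of_forall fun x => hTbd n _
  have hTintf : ∀ n, Integrable (fun x => T n (φ (f x))) μ := by
    intro n
    refine ⟨((hTm n).comp hf.measurable).aestronglyMeasurable, ?_⟩
    exact HasFiniteIntegral.of_bounded (C := n)
      (Filter.Eventually.of_forall fun x => hTbd n _)
  -- integral of each truncated cocycle is 0
  have key : ∀ n, ∫ x, (T n (φ (f x)) - T n (φ x)) ∂μ = 0 := by
    intro n
    rw [integral_sub (hTintf n) (hTint n)]
    have : ∫ x, T n (φ (f x)) ∂μ = ∫ x, T n (φ x) ∂μ := by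
      rw [← hf.map_eq, integral_map hf.measurable.aemeasurable
        (hTm n).aestronglyMeasurable, hf.map_eq]
    rw [this, sub_self]
  -- dominated convergence
  have hdom : ∀ n, ∀ᵐ x ∂μ, ‖T n (φ (f x)) - T n (φ x)‖ ≤
      (fun x => |Real.log (ψ (f x)) - Real.log (ψ x)|) x := by
    intro n
    refine Filter.Eventually.of_forall fun x => ?_
    simpa using clamp_lipschitz n (φ (f x)) (φ x)
  have hptw : ∀ᵐ x ∂μ, Tendsto (fun n => T n (φ (f x)) - T n (φ x)) atTop
      (nhds (Real.log (ψ (f x)) - Real.log (ψ x))) := by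
    refine Filter.Eventually.of_forall fun x => ?_
    have hlim : ∀ t : ℝ, Tendsto (fun n : ℕ => T n t) atTop (nhds t) := by
      intro t
      refine tendsto_atTop_of_eventually_const (i₀ := ⌈|t|⌉₊) fun n hn => ?_
      have h1 : |t| ≤ (n : ℝ) := Nat.ceil_le.mp hn
      simp only [hT]
      rw [min_eq_left (le_trans (le_abs_self t) h1),
        max_eq_left (le_trans (neg_le_neg h1) (neg_abs_le t))]
    exact ((hlim (φ (f x))).sub (hlim (φ x)))
  have := tendsto_integral_of_dominated_convergence _
    (fun n => ((hTm n).comp hf.measurable).sub (hTm n) |>.aestronglyMeasurable)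
    hg.abs hdom hptw
  have h0 : Tendsto (fun _ : ℕ => (0:ℝ)) atTop
      (nhds (∫ x, (Real.log (ψ (f x)) - Real.log (ψ x)) ∂μ)) := by
    simpa [key] using this
  exact (tendsto_nhds_unique tendsto_const_nhds h0).symm
end
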